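/- arXiv:1512.01756 — 5 statements merged into one kernel-verified Lean document; each statement's English description precedes it below -/
import Mathlib

section
/- Assume Eᵀ·E = I (E has orthonormal columns). Let u_L ∈ ℝ^r satisfy u_Lᵀ L = 0, set u_S := Eᵀ u_L, and let f̃ ∈ ℝ^r satisfy u_Lᵀ f̃ = 0. For any x_S ∈ ℝ^k, define the recovered solution u := A⁻¹(f̃ − E·x_S) and the Schur right-hand side b_S := B·A⁻¹·f̃. Then the error in the recovered solution is bounded by the error of the Schur complement solution: ‖L·u − f̃‖₂ ≤ ‖S·x_S − (b_S − u_S(u_Sᵀ b_S))‖₂, where ‖·‖₂ is the Euclidean norm. (Claim 2.) -/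
open Matrix

lemma euclid_norm_mulVec_orthonormal {r k : ℕ}
    (E : Matrix (Fin r) (Fin k) ℝ) (hE : Eᵀ * E = 1) (v : Fin k → ℝ) :
    ‖(EuclideanSpace.equiv (Fin r) ℝ).symm (E *ᵥ v)‖ =
      ‖(EuclideanSpace.equiv (Fin k) ℝ).symm v‖ := by
  have h1 : (E *ᵥ v) ⬝ᵥ (E *ᵥ v) = v ⬝ᵥ v := by
    rw [Matrix.dotProduct_mulVec, ← Matrix.mulVec_transpose,
      Matrix.mulVec_mulVec, hE, Matrix.one_mulVec]
  rw [EuclideanSpace.norm_eq, EuclideanSpace.norm_eq]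
  congr 1
  simpa [dotProduct, Real.norm_eq_abs, sq_abs, pow_two] using h1

/-- Claim 2: the error in the solution recovered from the regularized Schur
complement system is bounded by the residual of the Schur complement solve,
in the Euclidean norm. -/
theorem recovered_solution_error_bound
    {r k : ℕ} (hr : 0 < r) (hk : 0 < k)
    (A L : Matrix (Fin r) (Fin r) ℝ)
    (E : Matrix (Fin r) (Fin k) ℝ) (B : Matrix (Fin k) (Fin r) ℝ)
    (hA : IsUnit A.det) (hL : L = A + E * B)
    (S : Matrix (Fin k) (Fin k) ℝ) (hS : S = 1 + B * A⁻¹ * E)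
    (hE : Eᵀ * E = 1)
    (uL : Fin r → ℝ) (huL : uL ᵥ* L = 0)
    (uS : Fin k → ℝ) (huS : uS = Eᵀ *ᵥ uL)
    (f : Fin r → ℝ) (hf : uL ⬝ᵥ f = 0)
    (xS : Fin k → ℝ)
    (u : Fin r → ℝ) (hu : u = A⁻¹ *ᵥ (f - E *ᵥ xS))
    (bS : Fin k → ℝ) (hbS : bS = (B * A⁻¹) *ᵥ f) :
    ‖(EuclideanSpace.equiv (Fin r) ℝ).symm (L *ᵥ u - f)‖ ≤
      ‖(EuclideanSpace.equiv (Fin k) ℝ).symm (S *ᵥ xS - (bS - (uS ⬝ᵥ bS) • uS))‖ := by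
  have hAinv : A * A⁻¹ = 1 := Matrix.mul_nonsing_inv A hA
  have hvm : uL ᵥ* A + uL ᵥ* (E * B) = 0 := by
    rw [← Matrix.vecMul_add, ← hL, huL]
  have hEBA : uL ᵥ* (E * B * A⁻¹) = -uL := by
    have h2 : uL ᵥ* (E * B) = -(uL ᵥ* A) := by
      rw [eq_neg_iff_add_eq_zero, add_comm]; exact hvm
    rw [← Matrix.vecMul_vecMul, h2, Matrix.neg_vecMul, Matrix.vecMul_vecMul,
      hAinv, Matrix.vecMul_one]
  have hzero : uS ⬝ᵥ bS = 0 := by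
    rw [huS, hbS, Matrix.dotProduct_mulVec, Matrix.mulVec_transpose,
      Matrix.vecMul_vecMul, ← Matrix.mul_assoc, hEBA]
    simpa using hf
  rw [hzero]
  have hvec : L *ᵥ u - f = -(E *ᵥ (S *ᵥ xS - bS)) := by
    subst hL hS hu hbS
    rw [Matrix.add_mulVec, Matrix.mulVec_mulVec, Matrix.mulVec_mulVec, hAinv,
      Matrix.one_mulVec, Matrix.mulVec_sub, Matrix.mulVec_sub,
      Matrix.add_mulVec, Matrix.one_mulVec, Matrix.mulVec_mulVec,
      Matrix.mulVec_mulVec]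
    rw [Matrix.mulVec_add, Matrix.mulVec_mulVec,
      show E * (B * A⁻¹ * E) = E * B * A⁻¹ * E by simp [Matrix.mul_assoc],
      show E * (B * A⁻¹) = E * B * A⁻¹ by simp [Matrix.mul_assoc]]
    abel
  rw [hvec]
  simp only [map_neg, norm_neg, zero_smul, sub_zero]
  rw [euclid_norm_mulVec_orthonormal E hE]
end

section
/- Let u_L ∈ ℝ^r satisfy u_Lᵀ L = 0 and set u_S := Eᵀ u_L. If f̃ ∈ ℝ^r satisfies u_Lᵀ f̃ = 0, then the projection error term vanishes: E·(u_S · (u_Sᵀ (B·A⁻¹·f̃))) = 0, i.e. the vector obtained by applying E to u_S scaled by the inner product of u_S with B·A⁻¹·f̃ is the zero vector in ℝ^r. -/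
open Matrix

/-- The projection error term vanishes: if `u_Lᵀ L = 0`, `u_S = Eᵀ u_L`, and
`u_Lᵀ f̃ = 0`, then `E·(u_S (u_Sᵀ B·A⁻¹·f̃)) = 0`. -/
theorem projection_error_term_vanishes
    {r k : ℕ} (hr : 0 < r) (hk : 0 < k)
    (A L : Matrix (Fin r) (Fin r) ℝ)
    (E : Matrix (Fin r) (Fin k) ℝ) (B : Matrix (Fin k) (Fin r) ℝ)
    (hA : IsUnit A.det) (hL : L = A + E * B)
    (uL : Fin r → ℝ) (huL : uL ᵥ* L = 0)
    (uS : Fin k → ℝ) (huS : uS = Eᵀ *ᵥ uL)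
    (f : Fin r → ℝ) (hf : uL ⬝ᵥ f = 0) :
    E *ᵥ ((uS ⬝ᵥ ((B * A⁻¹) *ᵥ f)) • uS) = 0 := by
  have hEB : uL ᵥ* (E * B) = -(uL ᵥ* A) := by
    rw [hL, vecMul_add] at huL
    have := eq_neg_of_add_eq_zero_right huL
    linear_combination (norm := module) this
  have hscal : uS ⬝ᵥ ((B * A⁻¹) *ᵥ f) = 0 := by
    rw [huS, mulVec_transpose, dotProduct_mulVec, vecMul_vecMul,
        ← Matrix.mul_assoc, ← vecMul_vecMul, hEB]
    rw [show -(uL ᵥ* A) ᵥ* A⁻¹ = -(uL ᵥ* (A * A⁻¹)) by rw [neg_vecMul, vecMul_vecMul]]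
    rw [Matrix.mul_nonsing_inv A hA]
    simp [hf]
  rw [hscal, zero_smul, mulVec_zero]
end

section
/- Correctness of the deflation method: if w ∈ ℝ^k satisfies the deflated system P·(S·w) = P·b for some b ∈ ℝ^k, then the assembled vector x := Z·C⁻¹·Zᵀ·b + Q·w satisfies the original system S·x = b. -/
open Matrix

/-- Correctness of the deflation method: if `P·(S·w) = P·b`, then the assembled
vector `x = Z·C⁻¹·Zᵀ·b + Q·w` satisfies the original system `S·x = b`. -/
theorem deflation_method_correct
    {k d : ℕ} (hk : 0 < k) (hd : 0 < d)
    (S : Matrix (Fin k) (Fin k) ℝ) (Z : Matrix (Fin k) (Fin d) ℝ)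
    (C : Matrix (Fin d) (Fin d) ℝ) (hC : C = Zᵀ * S * Z) (hCunit : IsUnit C.det)
    (P Q : Matrix (Fin k) (Fin k) ℝ)
    (hP : P = 1 - S * Z * C⁻¹ * Zᵀ)
    (hQ : Q = 1 - Z * C⁻¹ * Zᵀ * S)
    (b w : Fin k → ℝ) (hw : P *ᵥ (S *ᵥ w) = P *ᵥ b)
    (x : Fin k → ℝ) (hx : x = (Z * C⁻¹ * Zᵀ) *ᵥ b + Q *ᵥ w) :
    S *ᵥ x = b := by
  subst hx hP hQ
  have hSQ : S * (1 - Z * C⁻¹ * Zᵀ * S) = (1 - S * Z * C⁻¹ * Zᵀ) * S := by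
    simp [Matrix.mul_sub, Matrix.sub_mul, Matrix.mul_assoc]
  have hw' : ((1 - S * Z * C⁻¹ * Zᵀ) * S) *ᵥ w = (1 - S * Z * C⁻¹ * Zᵀ) *ᵥ b := by
    rw [← mulVec_mulVec]; exact hw
  rw [mulVec_add, mulVec_mulVec, mulVec_mulVec, hSQ, hw', sub_mulVec, one_mulVec]
  simp [mulVec_mulVec, Matrix.mul_assoc]
end

section
/- Correctness of the deflated right-preconditioned method: let M be an invertible k×k real matrix. If y ∈ ℝ^k satisfies the deflated right-preconditioned system P·S·M⁻¹·y = P·b for some b ∈ ℝ^k, then the assembled vector x := Z·C⁻¹·Zᵀ·b + Q·M⁻¹·y satisfies the original system S·x = b. -/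
open Matrix

/-- Correctness of the deflated right-preconditioned method: if
`P·S·M⁻¹·y = P·b`, then `x = Z·C⁻¹·Zᵀ·b + Q·M⁻¹·y` satisfies `S·x = b`. -/
theorem deflated_preconditioned_method_correct
    {k d : ℕ} (hk : 0 < k) (hd : 0 < d)
    (S : Matrix (Fin k) (Fin k) ℝ) (Z : Matrix (Fin k) (Fin d) ℝ)
    (C : Matrix (Fin d) (Fin d) ℝ) (hC : C = Zᵀ * S * Z) (hCunit : IsUnit C.det)
    (P Q : Matrix (Fin k) (Fin k) ℝ)
    (hP : P = 1 - S * Z * C⁻¹ * Zᵀ)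
    (hQ : Q = 1 - Z * C⁻¹ * Zᵀ * S)
    (M : Matrix (Fin k) (Fin k) ℝ) (hM : IsUnit M.det)
    (b y : Fin k → ℝ) (hy : (P * S * M⁻¹) *ᵥ y = P *ᵥ b)
    (x : Fin k → ℝ) (hx : x = (Z * C⁻¹ * Zᵀ) *ᵥ b + Q *ᵥ (M⁻¹ *ᵥ y)) :
    S *ᵥ x = b := by
  have hSQ : S * Q = P * S := by
    rw [hP, hQ]
    simp [Matrix.mul_sub, Matrix.sub_mul, Matrix.mul_assoc]
  subst hx
  simp only [mulVec_add, mulVec_mulVec, ← Matrix.mul_assoc]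
  rw [hSQ, hy, ← add_mulVec]
  have h1 : S * Z * C⁻¹ * Zᵀ + P = 1 := by
    rw [hP]; abel
  rw [h1, one_mulVec]
end

section
/- Exact correctness of the regularized Schur complement method (Algorithm 1): let u_L ∈ ℝ^r satisfy u_Lᵀ L = 0 and ‖u_L‖₂ = 1, and set u_S := Eᵀ u_L. Given any f ∈ ℝ^r, define the projected right-hand side f̃ := f − u_L(u_Lᵀ f) and the Schur right-hand side b_S := B·A⁻¹·f̃. If x_S ∈ ℝ^k satisfies the regularized Schur system S·x_S = b_S − u_S(u_Sᵀ b_S) exactly, then the recovered vector u := A⁻¹(f̃ − E·x_S) satisfies L·u = f̃. -/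
open Matrix

/-- Exact correctness of the regularized Schur complement method (Algorithm 1):
if `x_S` solves the regularized Schur system `S·x_S = b_S − u_S(u_Sᵀ b_S)`
exactly, where `f̃ = f − u_L(u_Lᵀ f)` and `b_S = B·A⁻¹·f̃`, then the recovered
vector `u = A⁻¹(f̃ − E·x_S)` satisfies `L·u = f̃`. -/
theorem regularized_schur_method_correct
    {r k : ℕ} (hr : 0 < r) (hk : 0 < k)
    (A L : Matrix (Fin r) (Fin r) ℝ)
    (E : Matrix (Fin r) (Fin k) ℝ) (B : Matrix (Fin k) (Fin r) ℝ)
    (hA : IsUnit A.det) (hL : L = A + E * B)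
    (S : Matrix (Fin k) (Fin k) ℝ) (hS : S = 1 + B * A⁻¹ * E)
    (uL : Fin r → ℝ) (huL : uL ᵥ* L = 0)
    (hnorm : ‖(EuclideanSpace.equiv (Fin r) ℝ).symm uL‖ = 1)
    (uS : Fin k → ℝ) (huS : uS = Eᵀ *ᵥ uL)
    (f : Fin r → ℝ)
    (ftilde : Fin r → ℝ) (hft : ftilde = f - (uL ⬝ᵥ f) • uL)
    (bS : Fin k → ℝ) (hbS : bS = (B * A⁻¹) *ᵥ ftilde)
    (xS : Fin k → ℝ) (hxS : S *ᵥ xS = bS - (uS ⬝ᵥ bS) • uS)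
    (u : Fin r → ℝ) (hu : u = A⁻¹ *ᵥ (ftilde - E *ᵥ xS)) :
    L *ᵥ u = ftilde := by
  have hAAinv : A * A⁻¹ = 1 := mul_nonsing_inv A hA
  have huu : uL ⬝ᵥ uL = 1 := by
    have h2 : ‖(EuclideanSpace.equiv (Fin r) ℝ).symm uL‖ ^ 2 = 1 := by
      rw [hnorm]; norm_num
    rw [EuclideanSpace.norm_eq] at h2
    rw [Real.sq_sqrt (by positivity)] at h2
    simpa [dotProduct, sq, abs_mul_abs_self] using h2
  have hft0 : uL ⬝ᵥ ftilde = 0 := by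
    rw [hft, dotProduct_sub, dotProduct_smul, smul_eq_mul, huu, mul_one, sub_self]
  have hEB : uL ᵥ* (E * B) = -(uL ᵥ* A) := by
    have h := huL
    rw [hL, vecMul_add] at h
    rw [eq_neg_iff_add_eq_zero, add_comm]
    exact h
  have hkey : uL ᵥ* (E * (B * A⁻¹)) = -uL := by
    have : E * (B * A⁻¹) = (E * B) * A⁻¹ := (Matrix.mul_assoc E B A⁻¹).symm
    rw [this, ← vecMul_vecMul, hEB, neg_vecMul, vecMul_vecMul, hAAinv, vecMul_one]
  have huSbS : uS ⬝ᵥ bS = 0 := by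
    rw [huS, hbS, mulVec_transpose, dotProduct_mulVec, vecMul_vecMul, hkey,
      neg_dotProduct, hft0, neg_zero]
  have hSxS : xS + (B * A⁻¹ * E) *ᵥ xS = bS := by
    have h := hxS
    rw [hS, huSbS, zero_smul, sub_zero, add_mulVec, one_mulVec] at h
    exact h
  have hBAw : (B * A⁻¹) *ᵥ (ftilde - E *ᵥ xS) = xS := by
    rw [mulVec_sub, ← hbS, mulVec_mulVec]
    have h2 : (B * A⁻¹ * E) *ᵥ xS = bS - xS := by
      rw [← hSxS]; abel
    rw [h2]; abel
  rw [hu, hL, add_mulVec, mulVec_mulVec, hAAinv, one_mulVec,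
    mulVec_mulVec, Matrix.mul_assoc, ← mulVec_mulVec, hBAw]
  abel
end
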